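/- arXiv:2503.21299 — 2 statements merged into one kernel-verified Lean document; each statement's English description precedes it below -/
import Mathlib

section
/- Let τ > 0 and D > 0 be real numbers, and set Δt = 2τ and Δx = √(4·D·τ) (so that (Δx)² = 4·D·τ). Then: (i) for any grid function u : ℕ × ℤ → ℝ and any k ≥ 1, m ∈ ℤ, the discretized Maxwell–Cattaneo scheme τ·(u^{k+1}_m − 2u^k_m + u^{k−1}_m)/(Δt)² + (u^k_m − u^{k−1}_m)/Δt = D·(u^k_{m+1} − u^{k+1}_m − u^{k−1}_m + u^k_{m−1})/(Δx)² holds at (k,m) if and only if the random walk equation u^{k+1}_m = (1/2)·u^k_{m+1} + (1/2)·u^k_{m−1} holds at (k,m); and (ii) these choices of step sizes satisfy (Δx)²/(2·Δt) = D. -/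
theorem stmt_6 (τ D Δt Δx : ℝ) (hτ : 0 < τ) (hD : 0 < D)
    (hΔt : Δt = 2 * τ) (hΔx : Δx = Real.sqrt (4 * D * τ)) :
    (∀ (u : ℕ × ℤ → ℝ) (k : ℕ), 1 ≤ k → ∀ m : ℤ,
      (τ * (u (k + 1, m) - 2 * u (k, m) + u (k - 1, m)) / Δt ^ 2
          + (u (k, m) - u (k - 1, m)) / Δt
        = D * (u (k, m + 1) - u (k + 1, m) - u (k - 1, m) + u (k, m - 1)) / Δx ^ 2
      ↔ u (k + 1, m) = (1/2) * u (k, m + 1) + (1/2) * u (k, m - 1)))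
    ∧ Δx ^ 2 / (2 * Δt) = D := by
  have hx2 : Δx ^ 2 = 4 * D * τ := by
    rw [hΔx, Real.sq_sqrt (by positivity : (0:ℝ) ≤ 4 * D * τ)]
  constructor
  · intro u k hk m
    rw [hΔt, hx2]
    rw [div_add_div _ _ (by positivity) (by positivity), div_eq_div_iff (by positivity) (by positivity)]
    constructor
    · intro h
      have h' : (16 * D * τ ^ 3) * (u (k + 1, m)
          - ((1/2) * u (k, m + 1) + (1/2) * u (k, m - 1))) = 0 := by
        linear_combination h
      have h16 : (16 * D * τ ^ 3 : ℝ) ≠ 0 := by positivity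
      have := (mul_eq_zero.mp h').resolve_left h16
      linarith
    · intro h
      rw [h]; ring
  · rw [hΔt, hx2]; field_simp; ring
end

section
/- Let τ > 0 and D > 0 be real numbers, and set Δx = √(3·τ·D) (so that 3·τ·D/(Δx)² = 1) and Δt = 2τ. Then for any grid function u : ℕ × ℤ → ℝ and any k ∈ ℕ, m ∈ ℤ, the nonstandard discretization of the symmetry-derived heat PDE, namely [ (u^{k+1}_{m+1} + u^{k+1}_m + u^{k+1}_{m−1})/3 − u^k_m ]/Δt = D·(u^k_{m+1} − 2u^k_m + u^k_{m−1})/(Δx)² + [τ·D/(Δt·(Δx)²)]·(u^{k+1}_{m+1} − 2u^{k+1}_m + u^{k+1}_{m−1} − u^k_{m+1} + 2u^k_m − u^k_{m−1}), holds at (k,m) if and only if the three-point random walk equation u^{k+1}_m = (1/3)·u^k_{m+1} + (1/3)·u^k_m + (1/3)·u^k_{m−1} holds at (k,m). -/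
/-! With `Δx² = 3τD` and `Δt = 2τ` the two coefficients of the scheme become `2/(3Δt)` and
`1/(3Δt)`. The `u_{txx}` term then contributes `δ²u^{k+1}_m / 3`, which is exactly what the
averaged time difference adds to `u^{k+1}_m`, so the new time level survives only at the centre
and the scheme is `Δt⁻¹` times the three-point random walk equation. -/

theorem averagedScheme_sub_eq (v w : ℤ → ℝ) (m : ℤ) {Δt : ℝ} (hΔt : Δt ≠ 0) :
    ((w (m + 1) + w m + w (m - 1)) / 3 - v m) / Δt
      - (2 / (3 * Δt) * (v (m + 1) - 2 * v m + v (m - 1))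
        + 1 / (3 * Δt) * (w (m + 1) - 2 * w m + w (m - 1)
            - v (m + 1) + 2 * v m - v (m - 1)))
      = (w m - (1/3 * v (m + 1) + 1/3 * v m + 1/3 * v (m - 1))) / Δt := by
  field_simp
  ring

theorem averagedScheme_iff_randomWalk (v w : ℤ → ℝ) (m : ℤ) {Δt : ℝ} (hΔt : Δt ≠ 0) :
    ((w (m + 1) + w m + w (m - 1)) / 3 - v m) / Δt
      = 2 / (3 * Δt) * (v (m + 1) - 2 * v m + v (m - 1))
        + 1 / (3 * Δt) * (w (m + 1) - 2 * w m + w (m - 1)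
            - v (m + 1) + 2 * v m - v (m - 1))
    ↔ w m = 1/3 * v (m + 1) + 1/3 * v m + 1/3 * v (m - 1) := by
  rw [← sub_eq_zero, averagedScheme_sub_eq v w m hΔt, div_eq_zero_iff, sub_eq_zero,
    or_iff_left hΔt]

theorem stmt_9 (τ D Δt Δx : ℝ) (hτ : 0 < τ) (hD : 0 < D)
    (hΔx : Δx = Real.sqrt (3 * τ * D)) (hΔt : Δt = 2 * τ)
    (u : ℕ × ℤ → ℝ) (k : ℕ) (m : ℤ) :
    ((u (k + 1, m + 1) + u (k + 1, m) + u (k + 1, m - 1)) / 3 - u (k, m)) / Δt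
      = D * (u (k, m + 1) - 2 * u (k, m) + u (k, m - 1)) / Δx ^ 2
        + (τ * D / (Δt * Δx ^ 2))
          * (u (k + 1, m + 1) - 2 * u (k + 1, m) + u (k + 1, m - 1)
              - u (k, m + 1) + 2 * u (k, m) - u (k, m - 1))
    ↔ u (k + 1, m) = (1/3) * u (k, m + 1) + (1/3) * u (k, m) + (1/3) * u (k, m - 1) := by
  have hΔx_sq : Δx ^ 2 = 3 * τ * D := by
    rw [hΔx, Real.sq_sqrt (by positivity)]
  have hdiffusion : D / Δx ^ 2 = 2 / (3 * Δt) := by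
    rw [hΔx_sq, hΔt]
    field_simp
  have hmixed : τ * D / (Δt * Δx ^ 2) = 1 / (3 * Δt) := by
    rw [hΔx_sq]
    field_simp
  rw [mul_div_right_comm, hdiffusion, hmixed]
  exact averagedScheme_iff_randomWalk (fun j => u (k, j)) (fun j => u (k + 1, j)) m
    (by rw [hΔt]; positivity)
end
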